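/- Subgradient characterization of optimal decompositions (active-block structure): suppose β is an optimal solution of min_β { ||y − Xβ||_2/√n + (λ/n)||β||_{G,τ} } with Xβ ≠ y, and let (V^{(1)},...,V^{(p)}) be an optimal decomposition of β achieving ||β||_{G,τ}. Then for each i with V^{(i)} ≠ 0, it holds that X_{N_i}^T(y − Xβ)/||y − Xβ||_2 = λ τ_i V^{(i)}_{N_i} / (√n ||V^{(i)}_{N_i}||_2), and for each i with V^{(i)} = 0, ||X_{N_i}^T(y − Xβ)||_2 / ||y − Xβ||_2 ≤ λ τ_i / √n. -/

import Mathlib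

open scoped BigOperators

/-- Euclidean (ℓ2) norm of a finitely indexed real vector. -/
noncomputable def l2norm {m : Type*} [Fintype m] (v : m → ℝ) : ℝ :=
  Real.sqrt (∑ i, v i ^ 2)

/-- ℓ2 norm of the subvector of `v` indexed by the finite set `B`. -/
noncomputable def l2normOn {m : Type*} [Fintype m] (B : Finset m) (v : m → ℝ) : ℝ :=
  Real.sqrt (∑ j ∈ B, v j ^ 2)

/-- The graph-induced norm `‖β‖_{G,τ}`, defined as the infimum of
`∑ i, τ i * ‖V i‖₂` over all decompositions `∑ i, V i = β` with
`supp (V i) ⊆ N i`. -/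
noncomputable def graphNorm (p : ℕ) (N : Fin p → Finset (Fin p)) (τ : Fin p → ℝ)
    (β : Fin p → ℝ) : ℝ :=
  sInf { s | ∃ V : Fin p → Fin p → ℝ,
    (∀ j, (∑ i, V i j) = β j) ∧ (∀ i, ∀ j, j ∉ N i → V i j = 0) ∧
    s = ∑ i, τ i * l2norm (V i) }

lemma l2norm_nonneg' {m : Type*} [Fintype m] (v : m → ℝ) : 0 ≤ l2norm v :=
  Real.sqrt_nonneg _

lemma expand_sum {m : Type*} [Fintype m] (u w : m → ℝ) (t : ℝ) :
    ∑ j, (u j + t * w j) ^ 2 =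
      (∑ j, u j ^ 2) + 2 * t * (∑ j, u j * w j) + t ^ 2 * (∑ j, w j ^ 2) := by
  rw [Finset.mul_sum, Finset.mul_sum, ← Finset.sum_add_distrib, ← Finset.sum_add_distrib]
  exact Finset.sum_congr rfl fun j _ => by ring

set_option maxHeartbeats 1600000 in
/-- active-block subgradient characterization for an optimal
solution `β` (with `Xβ ≠ y`) and an optimal decomposition `(V i)` of `β`. -/
theorem optimal_decomposition_subgradient (n p : ℕ)
    (X : Matrix (Fin n) (Fin p) ℝ) (y : Fin n → ℝ) (lam : ℝ) (hlam : 0 < lam)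
    (hn : 0 < n) (N : Fin p → Finset (Fin p)) (τ : Fin p → ℝ)
    (hτ : ∀ i, 0 < τ i) (hN : ∀ i, i ∈ N i)
    (β : Fin p → ℝ) (hres : X.mulVec β ≠ y)
    (hopt : ∀ β' : Fin p → ℝ,
      l2norm (y - X.mulVec β) / Real.sqrt n + lam / n * graphNorm p N τ β ≤
      l2norm (y - X.mulVec β') / Real.sqrt n + lam / n * graphNorm p N τ β')
    (V : Fin p → Fin p → ℝ)
    (hVsum : ∀ j, (∑ i, V i j) = β j)
    (hVsupp : ∀ i, ∀ j, j ∉ N i → V i j = 0)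
    (hVopt : (∑ i, τ i * l2norm (V i)) = graphNorm p N τ β) :
    ∀ i : Fin p,
      (V i ≠ 0 → ∀ j ∈ N i,
        (X.transpose.mulVec (y - X.mulVec β)) j / l2norm (y - X.mulVec β) =
          lam * τ i * V i j / (Real.sqrt n * l2normOn (N i) (V i))) ∧
      (V i = 0 →
        l2normOn (N i) (X.transpose.mulVec (y - X.mulVec β)) /
            l2norm (y - X.mulVec β) ≤ lam * τ i / Real.sqrt n) := by
  classical
  intro i
  set r : Fin n → ℝ := y - X.mulVec β with hr_def
  have hr : r ≠ 0 := fun h => hres (sub_eq_zero.mp h).symm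
  set a : ℝ := ∑ k, r k ^ 2 with ha_def
  have ha : 0 < a := by
    obtain ⟨k, hk⟩ := Function.ne_iff.mp hr
    refine Finset.sum_pos' (fun k _ => sq_nonneg _) ⟨k, Finset.mem_univ _, ?_⟩
    exact (sq_nonneg _).lt_of_ne' (pow_ne_zero 2 hk)
  have hlr : l2norm r = Real.sqrt a := rfl
  have hsa : Real.sqrt a ≠ 0 := by positivity
  have hsa' : 0 < Real.sqrt a := Real.sqrt_pos.mpr ha
  have hn0 : (0:ℝ) < (n:ℝ) := by exact_mod_cast hn
  have hsn : (0:ℝ) < Real.sqrt n := Real.sqrt_pos.mpr hn0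
  have hsn2 : Real.sqrt n * Real.sqrt n = (n:ℝ) := Real.mul_self_sqrt hn0.le
  -- the key perturbation inequality
  have keyIneq : ∀ (e : Fin p → ℝ), (∀ j, j ∉ N i → e j = 0) → ∀ t : ℝ,
      l2norm r / Real.sqrt n + lam / n * τ i * l2norm (V i) ≤
      l2norm (r - t • X.mulVec e) / Real.sqrt n + lam / n * τ i * l2norm (V i + t • e) := by
    intro e he t
    have hdec : y - X.mulVec (β + t • e) = r - t • X.mulVec e := by
      rw [Matrix.mulVec_add, Matrix.mulVec_smul, hr_def]
      abel
    set V' : Fin p → Fin p → ℝ := fun i' => if i' = i then V i + t • e else V i' with hV'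
    have hcost : (∑ i', τ i' * l2norm (V' i')) =
        (∑ i', τ i' * l2norm (V i')) - τ i * l2norm (V i) + τ i * l2norm (V i + t • e) := by
      have h1 : ∀ i', τ i' * l2norm (V' i') = τ i' * l2norm (V i') +
          (if i' = i then τ i * (l2norm (V i + t • e) - l2norm (V i)) else 0) := by
        intro i'
        by_cases h : i' = i
        · rw [h]; simp [hV']; ring
        · simp [hV', h]
      rw [Finset.sum_congr rfl fun i' _ => h1 i', Finset.sum_add_distrib,
        Finset.sum_ite_eq' Finset.univ i (fun _ => τ i * (l2norm (V i + t • e) - l2norm (V i)))]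
      simp
      ring
    have hmem : ((∑ i', τ i' * l2norm (V i')) - τ i * l2norm (V i) + τ i * l2norm (V i + t • e)) ∈
        { s | ∃ W : Fin p → Fin p → ℝ,
          (∀ j, (∑ i', W i' j) = (β + t • e) j) ∧ (∀ i', ∀ j, j ∉ N i' → W i' j = 0) ∧
          s = ∑ i', τ i' * l2norm (W i') } := by
      refine ⟨V', ?_, ?_, hcost.symm⟩
      · intro j
        have h1 : ∀ i', V' i' j = V i' j + (if i' = i then t * e j else 0) := by
          intro i'
          by_cases h : i' = i
          · rw [h]; simp [hV']
          · simp [hV', h]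
        rw [Finset.sum_congr rfl fun i' _ => h1 i', Finset.sum_add_distrib,
          Finset.sum_ite_eq' Finset.univ i (fun _ => t * e j)]
        simp [hVsum j]
      · intro i' j hj
        by_cases h : i' = i
        · rw [h]; simp [hV', hVsupp i j (h ▸ hj), he j (h ▸ hj)]
        · simp [hV', h, hVsupp i' j hj]
    have hbdd : BddBelow { s | ∃ W : Fin p → Fin p → ℝ,
          (∀ j, (∑ i', W i' j) = (β + t • e) j) ∧ (∀ i', ∀ j, j ∉ N i' → W i' j = 0) ∧
          s = ∑ i', τ i' * l2norm (W i') } := by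
      refine ⟨0, fun s hs => ?_⟩
      obtain ⟨W, _, _, rfl⟩ := hs
      exact Finset.sum_nonneg fun i' _ => mul_nonneg (hτ i').le (l2norm_nonneg' _)
    have hub : graphNorm p N τ (β + t • e) ≤
        (∑ i', τ i' * l2norm (V i')) - τ i * l2norm (V i) + τ i * l2norm (V i + t • e) :=
      csInf_le hbdd hmem
    have h1 := hopt (β + t • e)
    rw [hdec, ← hVopt] at h1
    have hd : (0:ℝ) ≤ lam / n := by positivity
    have h2 : lam / n * graphNorm p N τ (β + t • e) ≤
        lam / n * ((∑ i', τ i' * l2norm (V i')) - τ i * l2norm (V i)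
          + τ i * l2norm (V i + t • e)) := mul_le_mul_of_nonneg_left hub hd
    nlinarith [h1, h2]
  constructor
  · -- active block
    intro hVne j hj
    set A : ℝ := ∑ j', V i j' ^ 2 with hA_def
    have hA : 0 < A := by
      obtain ⟨j', hj'⟩ := Function.ne_iff.mp hVne
      refine Finset.sum_pos' (fun k _ => sq_nonneg _) ⟨j', Finset.mem_univ _, ?_⟩
      exact (sq_nonneg _).lt_of_ne' (pow_ne_zero 2 hj')
    have hsA : 0 < Real.sqrt A := Real.sqrt_pos.mpr hA
    have hlA : l2norm (V i) = Real.sqrt A := rfl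
    have hAon : l2normOn (N i) (V i) = Real.sqrt A := by
      unfold l2normOn
      congr 1
      rw [hA_def]
      exact Finset.sum_subset (Finset.subset_univ _)
        (fun x _ hx => by rw [hVsupp i x hx]; ring)
    have main : ∀ e : Fin p → ℝ, (∀ j', j' ∉ N i → e j' = 0) →
        (∑ k, r k * X.mulVec e k) / Real.sqrt a =
          lam * τ i * (∑ j', V i j' * e j') / (Real.sqrt n * Real.sqrt A) := by
      intro e he
      set w : Fin n → ℝ := X.mulVec e with hw
      set b : ℝ := ∑ k, r k * w k with hb
      set c : ℝ := ∑ k, w k ^ 2 with hc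
      set B : ℝ := ∑ j', V i j' * e j' with hB
      set C : ℝ := ∑ j', e j' ^ 2 with hC
      have hq : ∀ t : ℝ, l2norm (r - t • w) = Real.sqrt (a - 2*t*b + t^2*c) := by
        intro t
        unfold l2norm
        congr 1
        calc ∑ k, ((r - t • w) k) ^ 2 = ∑ k, (r k + (-t) * w k) ^ 2 :=
              Finset.sum_congr rfl fun k _ => by simp; ring
          _ = a + 2*(-t)*b + (-t)^2*c := expand_sum r w (-t)
          _ = a - 2*t*b + t^2*c := by ring
      have hQ : ∀ t : ℝ, l2norm (V i + t • e) = Real.sqrt (A + 2*t*B + t^2*C) := by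
        intro t
        unfold l2norm
        congr 1
        calc ∑ k, ((V i + t • e) k) ^ 2 = ∑ k, (V i k + t * e k) ^ 2 :=
              Finset.sum_congr rfl fun k _ => by simp
          _ = A + 2*t*B + t^2*C := expand_sum (V i) e t
      set φ : ℝ → ℝ := fun t =>
        Real.sqrt (a - 2*t*b + t^2*c) / Real.sqrt n
          + lam / n * τ i * Real.sqrt (A + 2*t*B + t^2*C) with hφ
      have hmin : IsLocalMin φ 0 := by
        refine Filter.Eventually.of_forall fun t => ?_
        have h := keyIneq e he t
        rw [hq t, hQ t] at h
        have h0 : φ 0 = l2norm r / Real.sqrt n + lam / n * τ i * l2norm (V i) := by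
          simp only [hφ, hlr, hlA]
          norm_num
        rw [h0]
        exact h
      have hpoly : HasDerivAt (fun t : ℝ => a - 2*t*b + t^2*c) (-(2*b)) 0 := by
        have h1 : HasDerivAt (fun t : ℝ => a + -(2*b*t) + t^2*c)
            (0 + -(2*b*1) + (2*(0:ℝ)^1)*c) 0 := by
          exact (((hasDerivAt_const (0:ℝ) a).add
            (((hasDerivAt_id (0:ℝ)).const_mul (2*b)).neg)).add
            ((hasDerivAt_pow 2 (0:ℝ)).mul_const c))
        have heq : (fun t : ℝ => a - 2*t*b + t^2*c) = fun t : ℝ => a + -(2*b*t) + t^2*c :=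
          funext fun t => by ring
        rw [heq]
        convert h1 using 1
        norm_num
      have hPoly : HasDerivAt (fun t : ℝ => A + 2*t*B + t^2*C) (2*B) 0 := by
        have h1 : HasDerivAt (fun t : ℝ => A + 2*B*t + t^2*C)
            (0 + 2*B*1 + (2*(0:ℝ)^1)*C) 0 := by
          exact (((hasDerivAt_const (0:ℝ) A).add
            ((hasDerivAt_id (0:ℝ)).const_mul (2*B))).add
            ((hasDerivAt_pow 2 (0:ℝ)).mul_const C))
        have heq : (fun t : ℝ => A + 2*t*B + t^2*C) = fun t : ℝ => A + 2*B*t + t^2*C :=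
          funext fun t => by ring
        rw [heq]
        convert h1 using 1
        norm_num
      have hq0 : (fun t : ℝ => a - 2*t*b + t^2*c) 0 ≠ 0 := by
        simpa using ha.ne'
      have hQ0 : (fun t : ℝ => A + 2*t*B + t^2*C) 0 ≠ 0 := by
        simpa using hA.ne'
      have hder1 := (hpoly.sqrt hq0).div_const (Real.sqrt n)
      have hder2 := (hPoly.sqrt hQ0).const_mul (lam / n * τ i)
      have hder : HasDerivAt φ
          ((-(2*b) / (2 * Real.sqrt (a - 2*(0:ℝ)*b + (0:ℝ)^2*c))) / Real.sqrt n
            + lam / n * τ i * (2*B / (2 * Real.sqrt (A + 2*(0:ℝ)*B + (0:ℝ)^2*C)))) 0 :=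
        hder1.add hder2
      have hzero := hmin.hasDerivAt_eq_zero hder
      have hzero' : -(b / Real.sqrt a) / Real.sqrt n + lam / n * τ i * (B / Real.sqrt A) = 0 := by
        have e1 : a - 2*(0:ℝ)*b + (0:ℝ)^2*c = a := by ring
        have e2 : A + 2*(0:ℝ)*B + (0:ℝ)^2*C = A := by ring
        rw [e1, e2] at hzero
        calc -(b / Real.sqrt a) / Real.sqrt n + lam / n * τ i * (B / Real.sqrt A)
            = (-(2*b) / (2 * Real.sqrt a)) / Real.sqrt n
              + lam / n * τ i * (2*B / (2 * Real.sqrt A)) := by ring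
          _ = 0 := hzero
      -- algebra: b / √a = lam * τ i * B / (√n * √A)
      show b / Real.sqrt a = lam * τ i * B / (Real.sqrt n * Real.sqrt A)
      field_simp at hzero'
      rw [div_eq_div_iff hsa (by positivity)]
      refine mul_right_cancel₀ (ne_of_gt hsn) ?_
      linear_combination (-1:ℝ) * hzero' + b * Real.sqrt A * hsn2
    -- apply to e = single j 1
    have he : ∀ j', j' ∉ N i → (Pi.single j 1 : Fin p → ℝ) j' = 0 := by
      intro j' hj'
      exact Pi.single_eq_of_ne (fun h => hj' (by rw [h]; exact hj)) 1
    have hm := main (Pi.single j 1 : Fin p → ℝ) he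
    have hb' : (∑ k, r k * X.mulVec (Pi.single j 1 : Fin p → ℝ) k) = X.transpose.mulVec r j := by
      rw [Matrix.mulVec_single_one]
      simp [Matrix.mulVec, dotProduct, Matrix.transpose_apply, mul_comm]
    have hB' : (∑ j', V i j' * (Pi.single j 1 : Fin p → ℝ) j') = V i j := by
      simp [Pi.single_apply, Finset.sum_ite_eq']
    rw [hb', hB'] at hm
    rw [hlr, hAon]
    exact hm
  · -- inactive block
    intro hV0
    set g : Fin p → ℝ := X.transpose.mulVec r with hg
    set S : ℝ := ∑ j ∈ N i, g j ^ 2 with hS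
    have hS0 : 0 ≤ S := Finset.sum_nonneg fun _ _ => sq_nonneg _
    set s : ℝ := Real.sqrt S with hs
    have hson : l2normOn (N i) (X.transpose.mulVec r) = s := rfl
    have hs0 : 0 ≤ s := Real.sqrt_nonneg _
    rw [hson, hlr]
    rcases eq_or_lt_of_le hs0 with hsz | hsp
    · rw [← hsz, zero_div]
      exact div_nonneg (mul_nonneg hlam.le (hτ i).le) (Real.sqrt_nonneg _)
    -- e : the truncated gradient
    set e : Fin p → ℝ := fun j => if j ∈ N i then g j else 0 with he_def
    have he : ∀ j', j' ∉ N i → e j' = 0 := fun j' hj' => by simp [he_def, hj']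
    set w : Fin n → ℝ := X.mulVec e with hw
    set b : ℝ := ∑ k, r k * w k with hb
    set c : ℝ := ∑ k, w k ^ 2 with hc
    have hbS : b = S := by
      rw [hb, hw, hS]
      calc ∑ k, r k * X.mulVec e k = ∑ k, ∑ j', r k * (X k j' * e j') := by
            refine Finset.sum_congr rfl fun k _ => ?_
            rw [Matrix.mulVec, dotProduct, Finset.mul_sum]
        _ = ∑ j', e j' * g j' := by
            rw [Finset.sum_comm]
            refine Finset.sum_congr rfl fun j' _ => ?_
            rw [hg, Matrix.mulVec, dotProduct, Finset.mul_sum]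
            refine Finset.sum_congr rfl fun k _ => ?_
            rw [Matrix.transpose_apply]
            ring
        _ = ∑ j ∈ N i, g j ^ 2 := by
            rw [← Finset.sum_subset (Finset.subset_univ (N i))
              (fun x _ hx => by simp [he_def, hx])]
            refine Finset.sum_congr rfl fun j' hj' => ?_
            simp [he_def, hj']
            ring
    have hCe : (∑ j', e j' ^ 2) = S := by
      rw [hS, ← Finset.sum_subset (Finset.subset_univ (N i))
        (fun x _ hx => by simp [he_def, hx])]
      refine Finset.sum_congr rfl fun j' hj' => ?_
      simp [he_def, hj']
    have hq : ∀ t : ℝ, l2norm (r - t • w) = Real.sqrt (a - 2*t*b + t^2*c) := by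
      intro t
      unfold l2norm
      congr 1
      calc ∑ k, ((r - t • w) k) ^ 2 = ∑ k, (r k + (-t) * w k) ^ 2 :=
            Finset.sum_congr rfl fun k _ => by simp; ring
        _ = a + 2*(-t)*b + (-t)^2*c := expand_sum r w (-t)
        _ = a - 2*t*b + t^2*c := by ring
    have hqnn : ∀ t : ℝ, 0 ≤ a - 2*t*b + t^2*c := by
      intro t
      have := expand_sum r w (-t)
      nlinarith [Finset.sum_nonneg (fun k (_ : k ∈ Finset.univ) => sq_nonneg (r k + (-t) * w k))]
    have hVe : ∀ t : ℝ, 0 ≤ t → l2norm (V i + t • e) = t * s := by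
      intro t ht
      rw [hV0]
      unfold l2norm
      have : ∑ k, ((0 + t • e) k) ^ 2 = t^2 * S := by
        rw [← hCe, Finset.mul_sum]
        refine Finset.sum_congr rfl fun k _ => ?_
        simp
        ring
      rw [this, hs, Real.sqrt_mul (sq_nonneg t), Real.sqrt_sq ht]
    -- base inequality for t > 0
    have base : ∀ t : ℝ, 0 < t →
        Real.sqrt a ≤ Real.sqrt (a - 2*t*b + t^2*c) + lam / n * τ i * Real.sqrt n * (t * s) := by
      intro t ht
      have h := keyIneq e he t
      rw [hq t, hVe t ht.le, hlr] at h
      have hVi0 : l2norm (V i) = 0 := by rw [hV0]; unfold l2norm; simp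
      rw [hVi0] at h
      have h' := mul_le_mul_of_nonneg_left h hsn.le
      have e1 : Real.sqrt n * (Real.sqrt a / Real.sqrt n + lam / n * τ i * 0) = Real.sqrt a := by
        field_simp
        ring
      have e2 : Real.sqrt n * (Real.sqrt (a - 2*t*b + t^2*c) / Real.sqrt n
          + lam / n * τ i * (t * s)) =
          Real.sqrt (a - 2*t*b + t^2*c) + lam / n * τ i * Real.sqrt n * (t * s) := by
        field_simp
      rw [e1, e2] at h'
      exact h'
    set K : ℝ := lam / n * τ i * Real.sqrt n * s with hK
    set F : ℝ → ℝ := fun t => (2*S - t*c) / (Real.sqrt a + Real.sqrt (a - 2*t*b + t^2*c))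
      with hF
    have hFle : ∀ t : ℝ, 0 < t → F t ≤ K := by
      intro t ht
      have hD : 0 < Real.sqrt a + Real.sqrt (a - 2*t*b + t^2*c) :=
        lt_of_lt_of_le hsa' (le_add_of_nonneg_right (Real.sqrt_nonneg _))
      have h1 : Real.sqrt a - Real.sqrt (a - 2*t*b + t^2*c) ≤ K * t := by
        have := base t ht
        rw [hK]
        nlinarith
      have h2 : (Real.sqrt a - Real.sqrt (a - 2*t*b + t^2*c)) *
          (Real.sqrt a + Real.sqrt (a - 2*t*b + t^2*c)) = 2*t*b - t^2*c := by
        have := Real.sq_sqrt ha.le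
        have := Real.sq_sqrt (hqnn t)
        nlinarith
      have h3 : 2*t*S - t^2*c ≤ K * t * (Real.sqrt a + Real.sqrt (a - 2*t*b + t^2*c)) := by
        rw [← hbS]
        calc 2*t*b - t^2*c = (Real.sqrt a - Real.sqrt (a - 2*t*b + t^2*c)) *
              (Real.sqrt a + Real.sqrt (a - 2*t*b + t^2*c)) := h2.symm
          _ ≤ K * t * (Real.sqrt a + Real.sqrt (a - 2*t*b + t^2*c)) :=
              mul_le_mul_of_nonneg_right h1 hD.le
      rw [hF]
      rw [div_le_iff₀ hD]
      nlinarith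
    have hcont : ContinuousAt F 0 := by
      apply ContinuousAt.div
      · fun_prop
      · apply ContinuousAt.add continuousAt_const
        apply Real.continuous_sqrt.continuousAt.comp
        fun_prop
      · show Real.sqrt a + Real.sqrt (a - 2*(0:ℝ)*b + (0:ℝ)^2*c) ≠ 0
        have e1 : a - 2*(0:ℝ)*b + (0:ℝ)^2*c = a := by ring
        rw [e1]
        positivity
    have hF0 : F 0 ≤ K := by
      have htend : Filter.Tendsto F (nhdsWithin 0 (Set.Ioi 0)) (nhds (F 0)) :=
        hcont.continuousWithinAt
      exact le_of_tendsto htend (eventually_nhdsWithin_of_forall fun t ht => hFle t ht)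
    have hF0v : F 0 = S / Real.sqrt a := by
      rw [hF]
      have e1 : a - 2*(0:ℝ)*b + (0:ℝ)^2*c = a := by ring
      simp only [e1]
      rw [div_eq_div_iff (by positivity) hsa]
      ring
    rw [hF0v] at hF0
    -- S = s * s
    have hSs : S = s * s := (Real.mul_self_sqrt hS0).symm
    rw [hSs] at hF0
    -- conclude s / √a ≤ lam * τ i / √n
    have hKle : K = lam * τ i / Real.sqrt n * s := by
      rw [hK]
      field_simp
      linear_combination τ i * hsn2
    rw [hKle] at hF0
    have : s * (s / Real.sqrt a) ≤ s * (lam * τ i / Real.sqrt n) := by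
      calc s * (s / Real.sqrt a) = s * s / Real.sqrt a := by ring
        _ ≤ lam * τ i / Real.sqrt n * s := hF0
        _ = s * (lam * τ i / Real.sqrt n) := by ring
    exact le_of_mul_le_mul_left this hsp
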